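/- The normed space (ℓ∞, |||·|||), where |||x||| = ‖x‖_∞ + Σ_n r_n |⟨x, v_n⟩| with (v_n) dense in the unit sphere of ℓ₁ and r_n > 0 summable, is strictly convex: if |||x||| = |||y||| = 1 and x ≠ y, then |||x + y||| < 2. -/

import Mathlib

/-!
If `y` is not a multiple of `x`, some `2 × 2` minor of `(x, y)` is nonzero, so a vector of `ℓ₁`
supported on two coordinates pairs positively with `x` and negatively with `y`. By density some
`vₙ` does the same, and then `|⟨x + y, vₙ⟩| < |⟨x, vₙ⟩| + |⟨y, vₙ⟩|`; since `rₙ > 0` this makes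
the triangle inequality for `|||·|||` strict. If `y = c • x`, then `|c| = 1` by homogeneity, and
`c ≠ 1` forces `c = -1`, i.e. `x + y = 0`.
-/

open Filter Topology

/-- The sup norm of a real sequence. -/
noncomputable def supNorm (x : ℕ → ℝ) : ℝ := ⨆ k, |x k|

/-- The duality pairing `⟨x, v⟩ = ∑ₖ x k * v k`. -/
noncomputable def pairing (x v : ℕ → ℝ) : ℝ := ∑' k, x k * v k

/-- Read's norm `|||x||| = ‖x‖_∞ + ∑ₙ rₙ |⟨x, vₙ⟩|`. -/
noncomputable def readNorm (r : ℕ → ℝ) (v : ℕ → ℕ → ℝ) (x : ℕ → ℝ) : ℝ :=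
  supNorm x + ∑' n, r n * |pairing x (v n)|

section Pairing

variable {x y z w w' : ℕ → ℝ} {C : ℝ}

lemma summable_mul_of_abs_le (hx : ∀ k, |x k| ≤ C) (hw : Summable fun k => |w k|) :
    Summable fun k => x k * w k :=
  hw.mul_left C |>.of_norm_bounded fun k => by
    rw [Real.norm_eq_abs, abs_mul]
    exact mul_le_mul_of_nonneg_right (hx k) (abs_nonneg _)

lemma abs_pairing_le (hx : ∀ k, |x k| ≤ C) (hw : Summable fun k => |w k|) :
    |pairing x w| ≤ C * ∑' k, |w k| :=
  tsum_of_norm_bounded (hw.hasSum.mul_left C) fun k => by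
    rw [Real.norm_eq_abs, abs_mul]
    exact mul_le_mul_of_nonneg_right (hx k) (abs_nonneg _)

lemma abs_pairing_sub_pairing_le (hz : ∀ k, |z k| ≤ C) (hw : Summable fun k => |w k|)
    (hw' : Summable fun k => |w' k|) :
    |pairing z w - pairing z w'| ≤ C * ∑' k, |w k - w' k| := by
  have hd : Summable fun k => |w k - w' k| :=
    (hw.add hw').of_nonneg_of_le (fun _ => abs_nonneg _) fun k => abs_sub _ _
  have h := abs_pairing_le hz hd
  rwa [pairing, tsum_congr fun k => mul_sub (z k) (w k) (w' k),
    (summable_mul_of_abs_le hz hw).tsum_sub (summable_mul_of_abs_le hz hw')] at h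

lemma pairing_add_left (hx : ∀ k, |x k| ≤ C) (hy : ∀ k, |y k| ≤ C)
    (hw : Summable fun k => |w k|) : pairing (x + y) w = pairing x w + pairing y w := by
  rw [pairing, pairing, pairing,
    ← (summable_mul_of_abs_le hx hw).tsum_add (summable_mul_of_abs_le hy hw)]
  exact tsum_congr fun k => add_mul (x k) (y k) (w k)

lemma pairing_smul_left (c : ℝ) (x w : ℕ → ℝ) : pairing (c • x) w = c * pairing x w := by
  rw [pairing, pairing, ← tsum_mul_left]
  exact tsum_congr fun k => mul_assoc c (x k) (w k)

lemma pairing_smul_right (c : ℝ) (x w : ℕ → ℝ) : pairing x (c • w) = c * pairing x w := by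
  rw [pairing, pairing, ← tsum_mul_left]
  exact tsum_congr fun k => mul_left_comm (x k) c (w k)

lemma exists_pairing_pos_neg_of_mul_ne {j k : ℕ} (h : x j * y k ≠ x k * y j) :
    ∃ w : ℕ → ℝ, (Summable fun m => |w m|) ∧ 0 < pairing x w ∧ pairing y w < 0 := by
  have hjk : j ≠ k := by rintro rfl; exact h rfl
  set D := x j * y k - x k * y j
  have hD : D ≠ 0 := sub_ne_zero.2 h
  -- Cramer's rule for `a x j + b x k = D²`, `a y j + b y k = -D²`
  set w : ℕ → ℝ := fun m => if m = j then D * (x k + y k) else if m = k then -D * (x j + y j) else 0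
  have hw : ∀ m ∉ ({j, k} : Finset ℕ), w m = 0 := fun m hm => by
    simp only [Finset.mem_insert, Finset.mem_singleton, not_or] at hm
    simp only [w, if_neg hm.1, if_neg hm.2]
  have hpair : ∀ z : ℕ → ℝ, pairing z w = z j * w j + z k * w k := fun z => by
    rw [pairing, tsum_eq_sum fun m hm => by rw [hw m hm, mul_zero], Finset.sum_pair hjk]
  have hwj : w j = D * (x k + y k) := if_pos rfl
  have hwk : w k = -D * (x j + y j) := by simp only [w, if_neg hjk.symm, if_pos]
  refine ⟨w, summable_of_ne_finset_zero fun m hm => by rw [hw m hm, abs_zero], ?_, ?_⟩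
  · have : pairing x w = D ^ 2 := by rw [hpair, hwj, hwk]; simp only [D]; ring
    exact this ▸ sq_pos_of_ne_zero hD
  · have : pairing y w = -D ^ 2 := by rw [hpair, hwj, hwk]; simp only [D]; ring
    exact this ▸ neg_neg_of_pos (sq_pos_of_ne_zero hD)

lemma exists_unit_pairing_pos_neg (hw : Summable fun k => |w k|) (hx : 0 < pairing x w)
    (hy : pairing y w < 0) :
    ∃ u : ℕ → ℝ, (Summable fun k => |u k|) ∧ ∑' k, |u k| = 1 ∧
      0 < pairing x u ∧ pairing y u < 0 := by
  obtain ⟨i, hi⟩ : ∃ i, w i ≠ 0 := by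
    by_contra! h
    simp [pairing, h] at hx
  set s := ∑' k, |w k|
  have hs : 0 < s := hw.tsum_pos (fun _ => abs_nonneg _) i (abs_pos.2 hi)
  refine ⟨s⁻¹ • w, ?_, ?_, ?_, ?_⟩
  · simpa only [Pi.smul_apply, smul_eq_mul, abs_mul] using hw.mul_left |s⁻¹|
  · simp only [Pi.smul_apply, smul_eq_mul, abs_mul, tsum_mul_left, abs_inv, abs_of_pos hs]
    exact inv_mul_cancel₀ hs.ne'
  · rw [pairing_smul_right]; positivity
  · rw [pairing_smul_right]; exact mul_neg_of_pos_of_neg (inv_pos.2 hs) hy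

end Pairing

lemma supNorm_add_le {x y : ℕ → ℝ} {C : ℝ} (hx : ∀ k, |x k| ≤ C) (hy : ∀ k, |y k| ≤ C) :
    supNorm (x + y) ≤ supNorm x + supNorm y := by
  have hbdd : ∀ z : ℕ → ℝ, (∀ k, |z k| ≤ C) → BddAbove (Set.range fun k => |z k|) :=
    fun z hz => ⟨C, Set.forall_mem_range.2 hz⟩
  refine ciSup_le fun k => (abs_add_le (x k) (y k)).trans ?_
  exact add_le_add (le_ciSup (hbdd x hx) k) (le_ciSup (hbdd y hy) k)

section ReadNorm

variable {r : ℕ → ℝ} {v : ℕ → ℕ → ℝ}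

lemma readNorm_smul (c : ℝ) (x : ℕ → ℝ) : readNorm r v (c • x) = |c| * readNorm r v x := by
  have hsup : supNorm (c • x) = |c| * supNorm x := by
    rw [supNorm, supNorm, Real.mul_iSup_of_nonneg (abs_nonneg c)]
    simp only [Pi.smul_apply, smul_eq_mul, abs_mul]
  simp only [readNorm, hsup, pairing_smul_left, abs_mul, mul_add, ← tsum_mul_left, mul_left_comm]

lemma readNorm_zero : readNorm r v 0 = 0 := by
  simpa using readNorm_smul (r := r) (v := v) 0 0

lemma summable_mul_abs_pairing (hr : ∀ n, 0 ≤ r n) (hrsum : Summable r)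
    (hv1 : ∀ n, Summable fun k => |v n k|) (hv2 : ∀ n, ∑' k, |v n k| ≤ 1) {z : ℕ → ℝ} {C : ℝ}
    (hz : ∀ k, |z k| ≤ C) : Summable fun n => r n * |pairing z (v n)| := by
  have hC : 0 ≤ C := (abs_nonneg _).trans (hz 0)
  refine (hrsum.mul_right C).of_nonneg_of_le (fun n => mul_nonneg (hr n) (abs_nonneg _)) fun n => ?_
  refine mul_le_mul_of_nonneg_left ?_ (hr n)
  calc |pairing z (v n)| ≤ C * ∑' k, |v n k| := abs_pairing_le hz (hv1 n)
    _ ≤ C := mul_le_of_le_one_right hC (hv2 n)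

lemma readNorm_add_lt (hr : ∀ n, 0 ≤ r n) (hrsum : Summable r)
    (hv1 : ∀ n, Summable fun k => |v n k|) (hv2 : ∀ n, ∑' k, |v n k| ≤ 1) {x y : ℕ → ℝ} {C : ℝ}
    (hx : ∀ k, |x k| ≤ C) (hy : ∀ k, |y k| ≤ C) {n₀ : ℕ} (hrn₀ : 0 < r n₀)
    (hxn₀ : 0 < pairing x (v n₀)) (hyn₀ : pairing y (v n₀) < 0) :
    readNorm r v (x + y) < readNorm r v x + readNorm r v y := by
  have hle : ∀ n, r n * |pairing (x + y) (v n)| ≤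
      r n * |pairing x (v n)| + r n * |pairing y (v n)| := fun n => by
    rw [pairing_add_left hx hy (hv1 n), ← mul_add]
    exact mul_le_mul_of_nonneg_left (abs_add_le _ _) (hr n)
  have hlt : r n₀ * |pairing (x + y) (v n₀)| <
      r n₀ * |pairing x (v n₀)| + r n₀ * |pairing y (v n₀)| := by
    rw [pairing_add_left hx hy (hv1 n₀), ← mul_add]
    refine mul_lt_mul_of_pos_left ((abs_add_le _ _).lt_of_ne fun h => ?_) hrn₀
    rcases (abs_add_eq_add_abs_iff _ _).1 h with h | h <;> linarith [h.1, h.2]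
  have hsx := summable_mul_abs_pairing hr hrsum hv1 hv2 hx
  have hsy := summable_mul_abs_pairing hr hrsum hv1 hv2 hy
  have htsum := Summable.tsum_lt_tsum_of_nonneg
    (fun n => mul_nonneg (hr n) (abs_nonneg _)) hle hlt (hsx.add hsy)
  rw [hsx.tsum_add hsy] at htsum
  have := supNorm_add_le hx hy
  simp only [readNorm]
  linarith

lemma exists_index_pairing_pos_neg (hv1 : ∀ n, Summable fun k => |v n k|)
    (hdense : ∀ w : ℕ → ℝ, (Summable fun k => |w k|) → ∑' k, |w k| = 1 →
      ∀ ε > 0, ∃ n, ∑' k, |w k - v n k| < ε)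
    {x y w : ℕ → ℝ} {C : ℝ} (hx : ∀ k, |x k| ≤ C) (hy : ∀ k, |y k| ≤ C)
    (hw : Summable fun k => |w k|) (hw1 : ∑' k, |w k| = 1)
    (hxw : 0 < pairing x w) (hyw : pairing y w < 0) :
    ∃ n, 0 < pairing x (v n) ∧ pairing y (v n) < 0 := by
  have hC : 0 ≤ C := (abs_nonneg _).trans (hx 0)
  set m := min (pairing x w) (-pairing y w)
  have hm : 0 < m := lt_min hxw (neg_pos.2 hyw)
  obtain ⟨n, hn⟩ := hdense w hw hw1 (m / (C + 1)) (by positivity)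
  have hclose : C * ∑' k, |w k - v n k| < m := calc
    _ ≤ C * (m / (C + 1)) := by gcongr
    _ < m := by rw [← mul_div_assoc, div_lt_iff₀ (by positivity)]; linarith
  have hx' := abs_lt.1 ((abs_pairing_sub_pairing_le hx hw (hv1 n)).trans_lt hclose)
  have hy' := abs_lt.1 ((abs_pairing_sub_pairing_le hy hw (hv1 n)).trans_lt hclose)
  have := min_le_left (pairing x w) (-pairing y w)
  have := min_le_right (pairing x w) (-pairing y w)
  exact ⟨n, by linarith [hx'.2], by linarith [hy'.2]⟩

end ReadNorm

lemma eq_smul_of_mul_eq_mul {x y : ℕ → ℝ} {i : ℕ} (hi : x i ≠ 0)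
    (h : ∀ j k, x j * y k = x k * y j) : y = (y i / x i) • x := by
  funext k
  rw [Pi.smul_apply, smul_eq_mul, div_mul_eq_mul_div, eq_div_iff hi]
  linear_combination h i k

/-- `(ℓ∞, |||·|||)` is strictly convex, where `|||x||| = ‖x‖_∞ + ∑ₙ rₙ |⟨x, vₙ⟩|` with
`(vₙ)` dense in the unit sphere of `ℓ₁` and `rₙ > 0` summable: if
`|||x||| = |||y||| = 1` and `x ≠ y`, then `|||x + y||| < 2`. -/
theorem bidual_read_norm_strictly_convex
    (r : ℕ → ℝ) (hrpos : ∀ n, 0 < r n) (hrsum : Summable r)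
    (v : ℕ → ℕ → ℝ) (hv1 : ∀ n, Summable fun k => |v n k|)
    (hv2 : ∀ n, ∑' k, |v n k| = 1)
    (hdense : ∀ w : ℕ → ℝ, (Summable fun k => |w k|) → ∑' k, |w k| = 1 →
      ∀ ε > 0, ∃ n, ∑' k, |w k - v n k| < ε)
    (x y : ℕ → ℝ) (hx : ∃ C, ∀ k, |x k| ≤ C) (hy : ∃ C, ∀ k, |y k| ≤ C)
    (hx1 : readNorm r v x = 1) (hy1 : readNorm r v y = 1) (hne : x ≠ y) :
    readNorm r v (x + y) < 2 := by
  obtain ⟨Cx, hCx⟩ := hx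
  obtain ⟨Cy, hCy⟩ := hy
  obtain ⟨C, hxC, hyC⟩ : ∃ C, (∀ k, |x k| ≤ C) ∧ ∀ k, |y k| ≤ C :=
    ⟨max Cx Cy, fun k => (hCx k).trans (le_max_left _ _),
      fun k => (hCy k).trans (le_max_right _ _)⟩
  by_cases hcol : ∀ j k, x j * y k = x k * y j
  · obtain ⟨i, hi⟩ : ∃ i, x i ≠ 0 := by
      by_contra! h
      rw [show x = 0 from funext h, readNorm_zero] at hx1
      exact zero_ne_one hx1
    obtain ⟨c, hy⟩ : ∃ c : ℝ, y = c • x := ⟨_, eq_smul_of_mul_eq_mul hi hcol⟩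
    rw [hy, readNorm_smul, hx1, mul_one] at hy1
    rcases (abs_eq zero_le_one).1 hy1 with hc | hc <;> rw [hc] at hy
    · exact absurd (hy.trans (one_smul ℝ x)).symm hne
    · rw [hy, neg_one_smul, add_neg_cancel, readNorm_zero]
      exact two_pos
  · push Not at hcol
    obtain ⟨j, k, hjk⟩ := hcol
    obtain ⟨w₀, hw₀, hxw₀, hyw₀⟩ := exists_pairing_pos_neg_of_mul_ne hjk
    obtain ⟨w, hw, hw1, hxw, hyw⟩ := exists_unit_pairing_pos_neg hw₀ hxw₀ hyw₀
    obtain ⟨n, hxn, hyn⟩ := exists_index_pairing_pos_neg hv1 hdense hxC hyC hw hw1 hxw hyw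
    calc readNorm r v (x + y)
        < readNorm r v x + readNorm r v y := readNorm_add_lt (fun n => (hrpos n).le) hrsum hv1
          (fun n => (hv2 n).le) hxC hyC (hrpos n) hxn hyn
      _ = 2 := by rw [hx1, hy1]; norm_num
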